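/- arXiv:2009.06939 — 5 statements merged into one kernel-verified Lean document; each statement's English description precedes it below -/
import Mathlib

section
/- Let 0 < q < 1. Suppose u is a bounded positive function on Ω satisfying u(x) = G[u^q dμ](x) + G[ν](x) + h(x) for all x ∈ Ω, where h ≥ 0 with h ≤ ‖f‖_∞, and G[μ], G[ν] are bounded. Then for all x ∈ Ω: u(x) ≤ C^q·G[μ](x) + G[ν](x) + h(x), where C = max{1, (‖G[μ]‖_∞ + ‖G[ν]‖_∞ + ‖f‖_∞)^{1/(1−q)}}. -/
open MeasureTheory
open scoped ENNReal

/-- Upper estimate of Brezis–Kamin type: if `0 < q < 1`, `u` is a bounded positive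
function with `u = G[u^q dμ] + G[ν] + h` on `Ω`, `0 ≤ h ≤ ‖f‖_∞ = Mf`, and `G[μ]`, `G[ν]`
are bounded, then `u(x) ≤ C^q·G[μ](x) + G[ν](x) + h(x)` where
`C = max {1, (‖G[μ]‖_∞ + ‖G[ν]‖_∞ + Mf)^{1/(1−q)}}`. -/
theorem brezis_kamin_upper_estimate {Ω : Type*} [MeasurableSpace Ω]
    (G : Ω → Ω → ℝ≥0∞) (μ ν : Measure Ω)
    (q : ℝ) (hq0 : 0 < q) (hq1 : q < 1)
    (u h : Ω → ℝ≥0∞) (Mf : ℝ≥0∞) (hMf : Mf ≠ ⊤) (hh : ∀ x, h x ≤ Mf)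
    (hGμ : (⨆ z, ∫⁻ y, G z y ∂μ) ≠ ⊤)
    (hGν : (⨆ z, ∫⁻ y, G z y ∂ν) ≠ ⊤)
    (hub : (⨆ z, u z) ≠ ⊤) (hupos : ∀ x, 0 < u x)
    (heq : ∀ x, u x = (∫⁻ y, G x y * (u y) ^ q ∂μ) + (∫⁻ y, G x y ∂ν) + h x) :
    ∀ x, u x ≤
      (max 1 (((⨆ z, ∫⁻ y, G z y ∂μ) + (⨆ z, ∫⁻ y, G z y ∂ν) + Mf) ^ (1 / (1 - q)))) ^ q
        * (∫⁻ y, G x y ∂μ) + (∫⁻ y, G x y ∂ν) + h x := by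
  set A := ⨆ z, ∫⁻ y, G z y ∂μ with hA
  set B := ⨆ z, ∫⁻ y, G z y ∂ν with hB
  set S := ⨆ z, u z with hS
  set K := A + B + Mf with hK
  set C := max 1 (K ^ (1 / (1 - q))) with hC
  have h1q : (0:ℝ) < 1 - q := by linarith
  have hKtop : K ≠ ⊤ := by
    simp only [hK]
    exact ENNReal.add_ne_top.2 ⟨ENNReal.add_ne_top.2 ⟨hGμ, hGν⟩, hMf⟩
  have hSq_top : S ^ q ≠ ⊤ := ENNReal.rpow_ne_top_of_nonneg hq0.le hub
  have step1 : ∀ x, u x ≤ A * S ^ q + B + Mf := by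
    intro x
    rw [heq x]
    gcongr ?_ + ?_ + ?_
    · calc ∫⁻ y, G x y * u y ^ q ∂μ
          ≤ ∫⁻ y, G x y * S ^ q ∂μ := by
            refine lintegral_mono fun y => ?_
            exact mul_le_mul_right (ENNReal.rpow_le_rpow (le_iSup u y) hq0.le) _
        _ = (∫⁻ y, G x y ∂μ) * S ^ q := lintegral_mul_const' _ _ hSq_top
        _ ≤ A * S ^ q := by
            exact mul_le_mul_left (le_iSup (fun z => ∫⁻ y, G z y ∂μ) x) _
    · exact le_iSup (fun z => ∫⁻ y, G z y ∂ν) x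
    · exact hh x
  have hSleC : S ≤ C := by
    rcases le_or_gt S 1 with hs | hs
    · exact hs.trans (le_max_left _ _)
    · have hS0 : S ≠ 0 := by
        intro h0; rw [h0] at hs; exact (by simp at hs)
      have hSq1 : 1 ≤ S ^ q := by
        calc (1:ℝ≥0∞) = 1 ^ q := by simp
          _ ≤ S ^ q := ENNReal.rpow_le_rpow hs.le hq0.le
      have hSK : S ≤ K * S ^ q := by
        refine iSup_le fun z => (step1 z).trans ?_
        calc A * S ^ q + B + Mf ≤ A * S ^ q + B * S ^ q + Mf * S ^ q := by
              gcongr <;> exact le_mul_of_one_le_right' hSq1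
          _ = K * S ^ q := by rw [hK]; ring
      have hSq0 : S ^ q ≠ 0 := by
        intro h0; rw [h0] at hSq1; simp at hSq1
      have hsplit : S ^ (1 - q) * S ^ q = S := by
        rw [← ENNReal.rpow_add _ _ hS0 hub]
        norm_num
      have hS1q : S ^ (1 - q) ≤ K := by
        rw [← ENNReal.mul_le_mul_iff_left hSq0 hSq_top, hsplit]
        exact hSK
      calc S = (S ^ (1 - q)) ^ (1 / (1 - q)) := by
            rw [← ENNReal.rpow_mul, mul_one_div, div_self h1q.ne', ENNReal.rpow_one]
        _ ≤ K ^ (1 / (1 - q)) := ENNReal.rpow_le_rpow hS1q (by positivity)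
        _ ≤ C := le_max_right _ _
  intro x
  rw [heq x]
  have hCq_top : C ^ q ≠ ⊤ := by
    refine ENNReal.rpow_ne_top_of_nonneg hq0.le ?_
    rw [hC, ne_eq, max_eq_top]
    push_neg
    exact ⟨ENNReal.one_ne_top, ENNReal.rpow_ne_top_of_nonneg (by positivity) hKtop⟩
  gcongr ?_ + ?_ + ?_ <;> try exact le_rfl
  calc ∫⁻ y, G x y * u y ^ q ∂μ
      ≤ ∫⁻ y, G x y * C ^ q ∂μ := by
        refine lintegral_mono fun y => ?_
        refine mul_le_mul_right (ENNReal.rpow_le_rpow ((le_iSup u y).trans hSleC) hq0.le) _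
    _ = (∫⁻ y, G x y ∂μ) * C ^ q := lintegral_mul_const' _ _ hCq_top
    _ = C ^ q * (∫⁻ y, G x y ∂μ) := mul_comm _ _
end

section
/- Let 0 < q < 1 and suppose u is a bounded positive solution of u(x) = G[u^q dμ](x) + G[ν](x) + h(x) on Ω, where h ≥ 0, and the lower bound u ≥ (1−q)^{1/(1−q)} G[μ]^{1/(1−q)} holds (from the sublinear lower bound lemma) together with the iterated inequality G[μ]^s ≤ s·G[G[μ]^{s−1} dμ] for s ≥ 1. Then u(x) ≥ (1−q)^{1/(1−q)} G[μ](x)^{1/(1−q)} + G[ν](x) + h(x) for all x ∈ Ω. -/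
/-!
Feeding the lower bound `u ≥ c G[μ]^s`, with `s = 1/(1-q)` and `c = (1-q)^s`, into the
nonlinear term gives `G[u^q dμ] ≥ c^q G[G[μ]^{s-1} dμ]`, because `s q = s - 1`. Since
`c^q = s c`, the iterated inequality turns this into `G[u^q dμ] ≥ c G[μ]^s`; the terms
`G[ν] + h` of the equation for `u` are kept as they are.
-/

open MeasureTheory
open scoped ENNReal

theorem one_sub_rpow_inv_one_sub_rpow {q : ℝ} (hq1 : q < 1) :
    ((1 - q) ^ (1 / (1 - q))) ^ q = (1 - q) ^ (1 / (1 - q)) * (1 / (1 - q)) := by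
  have h1q : 0 < 1 - q := by linarith
  rw [← Real.rpow_mul h1q.le, show 1 / (1 - q) * q = 1 / (1 - q) - 1 by field_simp; ring,
    Real.rpow_sub h1q, Real.rpow_one, div_eq_mul_one_div]

theorem const_mul_lintegral_rpow_le_lintegral_mul_rpow {Ω : Type*} [MeasurableSpace Ω]
    {G : Ω → Ω → ℝ≥0∞} {μ : Measure Ω} {u : Ω → ℝ≥0∞} {c : ℝ≥0∞} {q s : ℝ} (hc : c ≠ ⊤)
    (hq : 0 ≤ q) (hsq : s * q = s - 1) (hcq : c ^ q = c * ENNReal.ofReal s)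
    (hlow : ∀ y, c * (∫⁻ z, G y z ∂μ) ^ s ≤ u y) (x : Ω)
    (hiter : (∫⁻ y, G x y ∂μ) ^ s
      ≤ ENNReal.ofReal s * ∫⁻ y, G x y * (∫⁻ z, G y z ∂μ) ^ (s - 1) ∂μ) :
    c * (∫⁻ y, G x y ∂μ) ^ s ≤ ∫⁻ y, G x y * u y ^ q ∂μ := by
  have hlow_q : ∀ y, c ^ q * (∫⁻ z, G y z ∂μ) ^ (s - 1) ≤ u y ^ q := fun y => by
    rw [← hsq, ENNReal.rpow_mul, ← ENNReal.mul_rpow_of_nonneg _ _ hq]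
    exact ENNReal.rpow_le_rpow (hlow y) hq
  calc c * (∫⁻ y, G x y ∂μ) ^ s
      ≤ c ^ q * ∫⁻ y, G x y * (∫⁻ z, G y z ∂μ) ^ (s - 1) ∂μ := by
        rw [hcq, mul_assoc]; gcongr
    _ = ∫⁻ y, G x y * (c ^ q * (∫⁻ z, G y z ∂μ) ^ (s - 1)) ∂μ := by
        rw [← lintegral_const_mul' _ _ (ENNReal.rpow_ne_top_of_nonneg hq hc)]
        simp only [mul_left_comm]
    _ ≤ ∫⁻ y, G x y * u y ^ q ∂μ := by gcongr with y; exact hlow_q y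

theorem brezis_kamin_lower_estimate_general {Ω : Type*} [MeasurableSpace Ω]
    (G : Ω → Ω → ℝ≥0∞) (μ ν : Measure Ω)
    (q : ℝ) (hq0 : 0 < q) (hq1 : q < 1)
    (u h : Ω → ℝ≥0∞)
    (heq : ∀ x, u x = (∫⁻ y, G x y * (u y) ^ q ∂μ) + (∫⁻ y, G x y ∂ν) + h x)
    (hlow : ∀ x, ENNReal.ofReal ((1 - q) ^ (1 / (1 - q))) * (∫⁻ y, G x y ∂μ) ^ (1 / (1 - q))
      ≤ u x)
    (hiter : ∀ s : ℝ, 1 ≤ s → ∀ x,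
      (∫⁻ y, G x y ∂μ) ^ s
        ≤ ENNReal.ofReal s * ∫⁻ y, G x y * (∫⁻ z, G y z ∂μ) ^ (s - 1) ∂μ) :
    ∀ x, ENNReal.ofReal ((1 - q) ^ (1 / (1 - q))) * (∫⁻ y, G x y ∂μ) ^ (1 / (1 - q))
        + (∫⁻ y, G x y ∂ν) + h x ≤ u x := by
  intro x
  have h1q : 0 < 1 - q := by linarith
  have hs1 : 1 ≤ 1 / (1 - q) := by rw [le_div_iff₀ h1q]; linarith
  have hcq : ENNReal.ofReal ((1 - q) ^ (1 / (1 - q))) ^ q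
      = ENNReal.ofReal ((1 - q) ^ (1 / (1 - q))) * ENNReal.ofReal (1 / (1 - q)) := by
    rw [ENNReal.ofReal_rpow_of_nonneg (by positivity) hq0.le, ← ENNReal.ofReal_mul (by positivity),
      one_sub_rpow_inv_one_sub_rpow hq1]
  rw [heq x]
  gcongr
  exact const_mul_lintegral_rpow_le_lintegral_mul_rpow ENNReal.ofReal_ne_top hq0.le
    (by field_simp; ring) hcq hlow x (hiter _ hs1 x)

/-- Lower estimate of Brezis–Kamin type: if `0 < q < 1`, `u` is a bounded positive solution
of `u = G[u^q dμ] + G[ν] + h` on `Ω`, the sublinear lower bound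
`u ≥ (1−q)^{1/(1−q)} G[μ]^{1/(1−q)}` holds, and the iterated inequality
`G[μ]^s ≤ s·G[G[μ]^{s−1} dμ]` holds for `s ≥ 1`, then
`u(x) ≥ (1−q)^{1/(1−q)} G[μ](x)^{1/(1−q)} + G[ν](x) + h(x)` for all `x`. -/
theorem brezis_kamin_lower_estimate {Ω : Type*} [MeasurableSpace Ω]
    (G : Ω → Ω → ℝ≥0∞) (μ ν : Measure Ω)
    (q : ℝ) (hq0 : 0 < q) (hq1 : q < 1)
    (u h : Ω → ℝ≥0∞) (hub : (⨆ z, u z) ≠ ⊤) (hupos : ∀ x, 0 < u x)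
    (heq : ∀ x, u x = (∫⁻ y, G x y * (u y) ^ q ∂μ) + (∫⁻ y, G x y ∂ν) + h x)
    (hlow : ∀ x, ENNReal.ofReal ((1 - q) ^ (1 / (1 - q))) * (∫⁻ y, G x y ∂μ) ^ (1 / (1 - q))
      ≤ u x)
    (hiter : ∀ s : ℝ, 1 ≤ s → ∀ x,
      (∫⁻ y, G x y ∂μ) ^ s
        ≤ ENNReal.ofReal s * ∫⁻ y, G x y * (∫⁻ z, G y z ∂μ) ^ (s - 1) ∂μ) :
    ∀ x, ENNReal.ofReal ((1 - q) ^ (1 / (1 - q))) * (∫⁻ y, G x y ∂μ) ^ (1 / (1 - q))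
        + (∫⁻ y, G x y ∂ν) + h x ≤ u x :=
  brezis_kamin_lower_estimate_general G μ ν q hq0 hq1 u h heq hlow hiter
end

section
/- Let 0 < q < 1, let μ, ν be nonnegative Radon measures on Ω with bounded Green potentials G[μ], G[ν], and let h ≥ 0 be bounded with ‖G[μ]‖_∞ + ‖G[ν]‖_∞ + ‖h‖_∞ > 0. Define u_0 := (1−q)^{1/(1−q)} G[μ]^{1/(1−q)} and u_j := G[u_{j−1}^q dμ] + G[ν] + h for j ≥ 1, and assume the iterated inequality G[μ]^s ≤ s G[G[μ]^{s−1} dμ] for s ≥ 1. Then the sequence (u_j) is pointwise nondecreasing: u_{j−1} ≤ u_j on Ω for every j ≥ 1. -/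
open MeasureTheory
open scoped ENNReal

/-!
With `s = 1/(1-q)` and `c = (1-q)^s` one has `s q = s - 1` and `c s = c^q`, so the iterated
inequality `G[μ]^s ≤ s G[G[μ]^{s-1} dμ]`, multiplied by `c`, reads `u₀ ≤ G[u₀^q dμ] ≤ u₁`.
The inductive step is monotonicity of `w ↦ G[w^q dμ]`.
-/

lemma one_div_one_sub_mul_self {q : ℝ} (hq1 : q < 1) : 1 / (1 - q) * q = 1 / (1 - q) - 1 := by
  have : 1 - q ≠ 0 := by linarith
  field_simp
  ring

lemma one_sub_rpow_one_div_one_sub_mul {q : ℝ} (hq1 : q < 1) :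
    (1 - q) ^ (1 / (1 - q)) * (1 / (1 - q)) = ((1 - q) ^ (1 / (1 - q))) ^ q := by
  have h1q : 0 < 1 - q := by linarith
  rw [← Real.rpow_mul h1q.le, one_div_one_sub_mul_self hq1, Real.rpow_sub h1q, Real.rpow_one]
  ring

theorem ofReal_mul_lintegral_rpow_le_lintegral_mul_rpow {Ω : Type*} [MeasurableSpace Ω]
    (G : Ω → Ω → ℝ≥0∞) (μ : Measure Ω) {s q c : ℝ} (hq : 0 ≤ q) (hc : 0 ≤ c)
    (hsq : s * q = s - 1) (hcs : c * s = c ^ q)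
    (hiter : ∀ x, (∫⁻ y, G x y ∂μ) ^ s
      ≤ ENNReal.ofReal s * ∫⁻ y, G x y * (∫⁻ z, G y z ∂μ) ^ (s - 1) ∂μ) (x : Ω) :
    ENNReal.ofReal c * (∫⁻ y, G x y ∂μ) ^ s
      ≤ ∫⁻ y, G x y * (ENNReal.ofReal c * (∫⁻ z, G y z ∂μ) ^ s) ^ q ∂μ :=
  calc ENNReal.ofReal c * (∫⁻ y, G x y ∂μ) ^ s
      ≤ ENNReal.ofReal c * (ENNReal.ofReal s * ∫⁻ y, G x y * (∫⁻ z, G y z ∂μ) ^ (s - 1) ∂μ) :=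
        mul_le_mul_right (hiter x) _
    _ = ∫⁻ y, G x y * (ENNReal.ofReal c * (∫⁻ z, G y z ∂μ) ^ s) ^ q ∂μ := by
        rw [← mul_assoc, ← ENNReal.ofReal_mul hc, hcs,
          ← lintegral_const_mul' _ _ ENNReal.ofReal_ne_top]
        refine lintegral_congr fun y => ?_
        rw [ENNReal.mul_rpow_of_nonneg _ _ hq, ENNReal.ofReal_rpow_of_nonneg hc hq,
          ← ENNReal.rpow_mul, hsq]
        ring

theorem successive_approximation_monotone_general {Ω : Type*} [MeasurableSpace Ω]
    (G : Ω → Ω → ℝ≥0∞) (μ ν : Measure Ω)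
    (q : ℝ) (hq0 : 0 < q) (hq1 : q < 1)
    (h : Ω → ℝ≥0∞) (u : ℕ → Ω → ℝ≥0∞)
    (hu0 : ∀ x, u 0 x
      = ENNReal.ofReal ((1 - q) ^ (1 / (1 - q))) * (∫⁻ y, G x y ∂μ) ^ (1 / (1 - q)))
    (huj : ∀ j x, u (j + 1) x
      = (∫⁻ y, G x y * (u j y) ^ q ∂μ) + (∫⁻ y, G x y ∂ν) + h x)
    (hiter : ∀ s : ℝ, 1 ≤ s → ∀ x,
      (∫⁻ y, G x y ∂μ) ^ s
        ≤ ENNReal.ofReal s * ∫⁻ y, G x y * (∫⁻ z, G y z ∂μ) ^ (s - 1) ∂μ) :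
    ∀ j x, u j x ≤ u (j + 1) x := by
  have hs : 1 ≤ 1 / (1 - q) := by rw [le_div_iff₀ (by linarith)]; linarith
  intro j
  induction j with
  | zero =>
    intro x
    have hbase := ofReal_mul_lintegral_rpow_le_lintegral_mul_rpow G μ hq0.le
      (Real.rpow_nonneg (by linarith) _) (one_div_one_sub_mul_self hq1)
      (one_sub_rpow_one_div_one_sub_mul hq1) (hiter _ hs) x
    simp only [← hu0] at hbase
    rw [huj]
    exact hbase.trans (le_add_right le_self_add)
  | succ j ih =>
    intro x
    rw [huj, huj]
    gcongr with y
    exact ih y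

/-- Monotonicity of the successive approximation scheme: with
`u_0 = (1−q)^{1/(1−q)} G[μ]^{1/(1−q)}` and `u_j = G[u_{j−1}^q dμ] + G[ν] + h`,
under boundedness of `G[μ]`, `G[ν]`, `h`, positivity of
`‖G[μ]‖_∞ + ‖G[ν]‖_∞ + ‖h‖_∞`, and the Grigor'yan–Verbitsky iterated inequality,
the sequence `(u_j)` is pointwise nondecreasing. -/
theorem successive_approximation_monotone {Ω : Type*} [MeasurableSpace Ω]
    (G : Ω → Ω → ℝ≥0∞) (μ ν : Measure Ω)
    (q : ℝ) (hq0 : 0 < q) (hq1 : q < 1)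
    (h : Ω → ℝ≥0∞) (u : ℕ → Ω → ℝ≥0∞)
    (hGμb : (⨆ z, ∫⁻ y, G z y ∂μ) ≠ ⊤)
    (hGνb : (⨆ z, ∫⁻ y, G z y ∂ν) ≠ ⊤)
    (hhb : (⨆ z, h z) ≠ ⊤)
    (hpos : 0 < (⨆ z, ∫⁻ y, G z y ∂μ) + (⨆ z, ∫⁻ y, G z y ∂ν) + (⨆ z, h z))
    (hu0 : ∀ x, u 0 x
      = ENNReal.ofReal ((1 - q) ^ (1 / (1 - q))) * (∫⁻ y, G x y ∂μ) ^ (1 / (1 - q)))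
    (huj : ∀ j x, u (j + 1) x
      = (∫⁻ y, G x y * (u j y) ^ q ∂μ) + (∫⁻ y, G x y ∂ν) + h x)
    (hiter : ∀ s : ℝ, 1 ≤ s → ∀ x,
      (∫⁻ y, G x y ∂μ) ^ s
        ≤ ENNReal.ofReal s * ∫⁻ y, G x y * (∫⁻ z, G y z ∂μ) ^ (s - 1) ∂μ) :
    ∀ j x, u j x ≤ u (j + 1) x :=
  successive_approximation_monotone_general G μ ν q hq0 hq1 h u hu0 huj hiter
end

section
/- Let 0 < q < 1 and suppose v satisfies v(x) ≥ G[v^q dμ](x) + G[ν](x) + h(x) on Ω (with v > 0), the lower bound v ≥ u_0 := (1−q)^{1/(1−q)} G[μ]^{1/(1−q)} holds, and define u_j = G[u_{j−1}^q dμ] + G[ν] + h. Then u_j ≤ v on Ω for every j, hence the limit solution u = lim u_j is minimal among solutions dominating u_0. -/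
open MeasureTheory
open scoped ENNReal

noncomputable def greenSublinearMap {Ω : Type*} [MeasurableSpace Ω] (G : Ω → Ω → ℝ≥0∞)
    (μ ν : Measure Ω) (q : ℝ) (h : Ω → ℝ≥0∞) (w : Ω → ℝ≥0∞) : Ω → ℝ≥0∞ :=
  fun x ↦ (∫⁻ y, G x y * w y ^ q ∂μ) + (∫⁻ y, G x y ∂ν) + h x

theorem monotone_greenSublinearMap {Ω : Type*} [MeasurableSpace Ω] (G : Ω → Ω → ℝ≥0∞)
    (μ ν : Measure Ω) {q : ℝ} (h : Ω → ℝ≥0∞) (hq : 0 ≤ q) :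
    Monotone (greenSublinearMap G μ ν q h) := fun _ _ hvw x ↦ by
  unfold greenSublinearMap
  gcongr with y
  exact hvw y

theorem successive_approximation_minimal_general {Ω : Type*} [MeasurableSpace Ω]
    (G : Ω → Ω → ℝ≥0∞) (μ ν : Measure Ω)
    (q : ℝ) (hq0 : 0 < q)
    (h : Ω → ℝ≥0∞) (u : ℕ → Ω → ℝ≥0∞) (v : Ω → ℝ≥0∞)
    (hvsuper : ∀ x, (∫⁻ y, G x y * (v y) ^ q ∂μ) + (∫⁻ y, G x y ∂ν) + h x ≤ v x)
    (hvlow : ∀ x, ENNReal.ofReal ((1 - q) ^ (1 / (1 - q))) * (∫⁻ y, G x y ∂μ) ^ (1 / (1 - q))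
      ≤ v x)
    (hu0 : ∀ x, u 0 x
      = ENNReal.ofReal ((1 - q) ^ (1 / (1 - q))) * (∫⁻ y, G x y ∂μ) ^ (1 / (1 - q)))
    (huj : ∀ j x, u (j + 1) x
      = (∫⁻ y, G x y * (u j y) ^ q ∂μ) + (∫⁻ y, G x y ∂ν) + h x) :
    (∀ j x, u j x ≤ v x) ∧ ∀ x, (⨆ j, u j x) ≤ v x := by
  have hu_le_v (j : ℕ) : u j ≤ v :=
    (monotone_greenSublinearMap G μ ν h hq0.le).seq_le_seq j (y := fun _ ↦ v)
      (fun x ↦ (hu0 x).trans_le (hvlow x)) (fun k _ ↦ (funext (huj k)).le) (fun _ _ ↦ hvsuper)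
  exact ⟨hu_le_v, fun x ↦ iSup_le fun j ↦ hu_le_v j x⟩

/-- Minimality of the successively approximated solution: if `v > 0` satisfies
`v ≥ G[v^q dμ] + G[ν] + h` and `v ≥ u_0 = (1−q)^{1/(1−q)} G[μ]^{1/(1−q)}`, then each
iterate `u_j` (with `u_j = G[u_{j−1}^q dμ] + G[ν] + h`) satisfies `u_j ≤ v`, and hence
the limit `u = lim u_j = ⨆_j u_j` satisfies `u ≤ v`. -/
theorem successive_approximation_minimal {Ω : Type*} [MeasurableSpace Ω]
    (G : Ω → Ω → ℝ≥0∞) (μ ν : Measure Ω)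
    (q : ℝ) (hq0 : 0 < q) (hq1 : q < 1)
    (h : Ω → ℝ≥0∞) (u : ℕ → Ω → ℝ≥0∞) (v : Ω → ℝ≥0∞)
    (hvpos : ∀ x, 0 < v x)
    (hvsuper : ∀ x, (∫⁻ y, G x y * (v y) ^ q ∂μ) + (∫⁻ y, G x y ∂ν) + h x ≤ v x)
    (hvlow : ∀ x, ENNReal.ofReal ((1 - q) ^ (1 / (1 - q))) * (∫⁻ y, G x y ∂μ) ^ (1 / (1 - q))
      ≤ v x)
    (hu0 : ∀ x, u 0 x
      = ENNReal.ofReal ((1 - q) ^ (1 / (1 - q))) * (∫⁻ y, G x y ∂μ) ^ (1 / (1 - q)))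
    (huj : ∀ j x, u (j + 1) x
      = (∫⁻ y, G x y * (u j y) ^ q ∂μ) + (∫⁻ y, G x y ∂ν) + h x) :
    (∀ j x, u j x ≤ v x) ∧ ∀ x, (⨆ j, u j x) ≤ v x :=
  successive_approximation_minimal_general G μ ν q hq0 h u v hvsuper hvlow hu0 huj
end

section
/- Let 0 < q < 1, γ > q, and let μ be a nonnegative Radon measure on Ω such that the weighted norm inequality ‖G[ψ dμ]‖_{L^γ(dμ)} ≤ C ‖ψ‖_{L^{γ/q}(dμ)} holds for all ψ ∈ L^{γ/q}(dμ). Suppose (u_j) is a nondecreasing sequence with u_0 ∈ L^γ(dμ), u_j = G[u_{j−1}^q dμ] + F where F ∈ L^γ(dμ), F ≥ 0. Then every u_j ∈ L^γ(dμ), and moreover sup_j ‖u_j‖_{L^γ(dμ)} ≤ C'' (1 + ‖F‖_{L^γ(dμ)})^{1/(1−q)} for a constant C'' depending only on C, q; hence the pointwise limit u = lim u_j ∈ L^γ(Ω, dμ). -/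
/-!
Write `N(f) = (∫ f^γ dμ)^{1/γ}`. The weighted norm inequality applied to `ψ = u_j^q` and the
quasi-triangle inequality of `N` give `N(u_{j+1}) ≤ 2^{1/γ} (C N(u_j)^q + N(F))`, so by induction
every `N(u_j)` is finite. Since the sequence is nondecreasing, `N(u_j)` satisfies the same
inequality with `N(u_j)` on both sides, and because `q < 1` a finite solution of
`x ≤ a (c x^q + b)` is at most `(a (c + 1) (1 + b))^{1/(1-q)}`. Monotone convergence carries the
bound to `sup_j u_j`. The potentials are measurable without any σ-finiteness of `μ`, because a
function with finite `L^γ` integral has σ-finite support.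
-/

open MeasureTheory
open scoped ENNReal

namespace ENNReal

theorem lintegral_Lp_add_le_two_rpow_mul {α : Type*} [MeasurableSpace α] {μ : Measure α}
    {f g : α → ℝ≥0∞} {p : ℝ} (hf : AEMeasurable f μ) (hg : AEMeasurable g μ) (hp : 0 < p) :
    (∫⁻ a, (f + g) a ^ p ∂μ) ^ (1 / p) ≤
      2 ^ (1 / p) * ((∫⁻ a, f a ^ p ∂μ) ^ (1 / p) + (∫⁻ a, g a ^ p ∂μ) ^ (1 / p)) := by
  rcases le_total 1 p with hp1 | hp1
  · exact (lintegral_Lp_add_le hf hg hp1).trans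
      (le_mul_of_one_le_left' (one_le_rpow one_le_two (by positivity)))
  · refine (lintegral_Lp_add_le_of_le_one hf hp.le hp1).trans ?_
    gcongr
    · exact one_le_two
    · linarith

theorem le_rpow_one_div_one_sub_of_le_mul_rpow_add {a b c x : ℝ≥0∞} {q : ℝ} (hq0 : 0 < q)
    (hq1 : q < 1) (ha : 1 ≤ a) (hx : x ≠ ∞) (h : x ≤ a * (c * x ^ q + b)) :
    x ≤ (a * (c + 1) * (1 + b)) ^ (1 / (1 - q)) := by
  have hq1' : 0 < 1 - q := sub_pos.2 hq1
  rcases le_total x 1 with hx1 | hx1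
  · exact hx1.trans (one_le_rpow (one_le_mul (one_le_mul ha le_add_self) le_self_add)
      (by positivity))
  have hxq : 1 ≤ x ^ q := one_le_rpow hx1 hq0
  -- once `x ≥ 1`, every term on the right is dominated by a multiple of `x ^ q`
  have hcancel : x ^ (1 - q) * x ^ q ≤ a * (c + 1) * (1 + b) * x ^ q := calc
    x ^ (1 - q) * x ^ q = x := by
      rw [← rpow_add _ _ (zero_lt_one.trans_le hx1).ne' hx, sub_add_cancel, rpow_one]
    _ ≤ a * ((c + 1) * x ^ q + (c + 1) * (b * x ^ q)) := h.trans (by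
      gcongr
      · exact le_self_add
      · exact (le_mul_of_one_le_right' hxq).trans (le_mul_of_one_le_left' le_add_self))
    _ = a * (c + 1) * (1 + b) * x ^ q := by ring
  calc x = (x ^ (1 - q)) ^ (1 / (1 - q)) := by
        rw [← rpow_mul, mul_one_div_cancel hq1'.ne', rpow_one]
    _ ≤ (a * (c + 1) * (1 + b)) ^ (1 / (1 - q)) := by
        gcongr
        exact (ENNReal.mul_le_mul_iff_left (zero_lt_one.trans_le hxq).ne'
          (rpow_ne_top_of_nonneg hq0.le hx)).1 hcancel

end ENNReal

section

variable {α β : Type*} [MeasurableSpace α] [MeasurableSpace β]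

theorem sigmaFinite_restrict_support_of_lintegral_rpow_ne_top {μ : Measure α} {f : α → ℝ≥0∞}
    {p : ℝ} (hf : Measurable f) (hp : 0 < p) (hfin : ∫⁻ x, f x ^ p ∂μ ≠ ∞) :
    SigmaFinite (μ.restrict (Function.support f)) := by
  set level : ℕ → Set α := fun n => {x | ((n : ℝ≥0∞) + 1)⁻¹ ≤ f x ^ p}
  have hlevel (n : ℕ) : μ (level n) < ∞ :=
    (meas_ge_le_lintegral_div (hf.pow_const p).aemeasurable (by simp) (by simp)).trans_lt
      (ENNReal.div_lt_top hfin (by simp))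
  refine Measure.sigmaFinite_of_countable (S := insert (Function.support f)ᶜ (Set.range level))
    ((Set.countable_range _).insert _) ?_ ?_
  · rintro s (rfl | ⟨n, rfl⟩)
    · simp [Measure.restrict_apply' (measurableSet_support hf)]
    · exact (Measure.restrict_apply_le _ _).trans_lt (hlevel n)
  · refine Set.eq_univ_of_forall fun x => ?_
    by_cases hx : f x = 0
    · exact ⟨_, Set.mem_insert _ _, by simpa using hx⟩
    obtain ⟨n, hn⟩ := ENNReal.exists_inv_nat_lt (a := f x ^ p) (by simp [hx, hp.le])
    exact ⟨level n, Set.mem_insert_of_mem _ ⟨n, rfl⟩,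
      (ENNReal.inv_le_inv.2 le_self_add).trans hn.le⟩

/-- The Green potential `G[ψ dμ]`. -/
noncomputable def greenPotential (μ : Measure β) (G : α → β → ℝ≥0∞) (ψ : β → ℝ≥0∞) (x : α) :
    ℝ≥0∞ :=
  ∫⁻ y, G x y * ψ y ∂μ

theorem measurable_greenPotential {μ : Measure β} {G : α → β → ℝ≥0∞} {ψ : β → ℝ≥0∞}
    (hG : Measurable (Function.uncurry G)) (hψ : Measurable ψ)
    [SigmaFinite (μ.restrict (Function.support ψ))] : Measurable (greenPotential μ G ψ) := by
  have hrestrict : greenPotential μ G ψ = fun x => ∫⁻ y in Function.support ψ, G x y * ψ y ∂μ :=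
    funext fun x => (setLIntegral_eq_of_support_subset (Function.support_mul_subset_right _ _)).symm
  rw [hrestrict]
  exact (hG.mul (hψ.comp measurable_snd)).lintegral_prod_right'

theorem measurable_greenPotential_rpow {μ : Measure β} {G : α → β → ℝ≥0∞} {v : β → ℝ≥0∞}
    {q γ : ℝ} (hG : Measurable (Function.uncurry G)) (hv : Measurable v) (hq : 0 < q)
    (hγ : 0 < γ) (hvγ : ∫⁻ y, v y ^ γ ∂μ ≠ ∞) :
    Measurable (greenPotential μ G fun y => v y ^ q) := by
  have hpow (y : β) : (v y ^ q) ^ (γ / q) = v y ^ γ := by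
    rw [← ENNReal.rpow_mul, mul_div_cancel₀ _ hq.ne']
  have := sigmaFinite_restrict_support_of_lintegral_rpow_ne_top (hv.pow_const q) (div_pos hγ hq)
    (μ := μ) (by simpa only [hpow] using hvγ)
  exact measurable_greenPotential hG (hv.pow_const q)

theorem lintegral_greenPotential_rpow_add_le {μ : Measure α} {G : α → α → ℝ≥0∞}
    {F v : α → ℝ≥0∞} {q γ : ℝ} {C : ℝ≥0∞} (hG : Measurable (Function.uncurry G)) (hq : 0 < q)
    (hγ : 0 < γ)
    (hnorm : ∀ ψ : α → ℝ≥0∞, Measurable ψ →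
      (∫⁻ x, greenPotential μ G ψ x ^ γ ∂μ) ^ (1 / γ) ≤ C * (∫⁻ x, ψ x ^ (γ / q) ∂μ) ^ (q / γ))
    (hF : Measurable F) (hv : Measurable v) (hvγ : ∫⁻ x, v x ^ γ ∂μ ≠ ∞) :
    (∫⁻ x, (greenPotential μ G (fun y => v y ^ q) x + F x) ^ γ ∂μ) ^ (1 / γ) ≤
      2 ^ (1 / γ) * (C * ((∫⁻ x, v x ^ γ ∂μ) ^ (1 / γ)) ^ q + (∫⁻ x, F x ^ γ ∂μ) ^ (1 / γ)) := by
  have hpow (y : α) : (v y ^ q) ^ (γ / q) = v y ^ γ := by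
    rw [← ENNReal.rpow_mul, mul_div_cancel₀ _ hq.ne']
  have hpotential := hnorm _ (hv.pow_const q)
  rw [funext hpow] at hpotential
  refine (ENNReal.lintegral_Lp_add_le_two_rpow_mul ?_ hF.aemeasurable hγ).trans ?_
  · exact (measurable_greenPotential_rpow hG hv hq hγ hvγ).aemeasurable
  · gcongr
    rwa [← ENNReal.rpow_mul, one_div_mul_eq_div]

theorem lintegral_iSup_rpow {μ : Measure α} {u : ℕ → α → ℝ≥0∞} {γ : ℝ} (hγ : 0 < γ)
    (hu : ∀ j, Measurable (u j)) (hmono : Monotone u) :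
    ∫⁻ x, (⨆ j, u j x) ^ γ ∂μ = ⨆ j, ∫⁻ x, u j x ^ γ ∂μ := by
  rw [← lintegral_iSup (fun j => (hu j).pow_const γ)
    fun i j hij x => ENNReal.rpow_le_rpow (hmono hij x) hγ.le]
  exact lintegral_congr fun x => (ENNReal.orderIsoRpow γ hγ).map_iSup _

theorem lintegral_iSup_rpow_ne_top {μ : Measure α} {u : ℕ → α → ℝ≥0∞} {γ : ℝ} {B : ℝ≥0∞}
    (hγ : 0 < γ) (hu : ∀ j, Measurable (u j)) (hmono : Monotone u) (hB : B ≠ ∞)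
    (hbound : ∀ j, (∫⁻ x, u j x ^ γ ∂μ) ^ (1 / γ) ≤ B) :
    ∫⁻ x, (⨆ j, u j x) ^ γ ∂μ ≠ ∞ := by
  rw [lintegral_iSup_rpow hγ hu hmono]
  refine ne_top_of_le_ne_top (ENNReal.rpow_ne_top_of_nonneg hγ.le hB) (iSup_le fun j => ?_)
  calc ∫⁻ x, u j x ^ γ ∂μ = ((∫⁻ x, u j x ^ γ ∂μ) ^ (1 / γ)) ^ γ := by
        rw [← ENNReal.rpow_mul, one_div_mul_cancel hγ.ne', ENNReal.rpow_one]
    _ ≤ B ^ γ := by gcongr; exact hbound j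

end

theorem successive_approximation_Lgamma_bound_general {Ω : Type*} [MeasurableSpace Ω]
    (G : Ω → Ω → ℝ≥0∞) (μ : Measure Ω)
    (hGmeas : Measurable (Function.uncurry G))
    (q γ : ℝ) (hq0 : 0 < q) (hq1 : q < 1) (hγ : q < γ)
    (C : ℝ≥0∞) (hCtop : C ≠ ⊤)
    (hnorm : ∀ ψ : Ω → ℝ≥0∞, Measurable ψ →
      (∫⁻ x, (∫⁻ y, G x y * ψ y ∂μ) ^ γ ∂μ) ^ (1 / γ)
        ≤ C * (∫⁻ x, ψ x ^ (γ / q) ∂μ) ^ (q / γ))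
    (F : Ω → ℝ≥0∞) (hFmeas : Measurable F) (hF : (∫⁻ x, F x ^ γ ∂μ) ≠ ⊤)
    (u : ℕ → Ω → ℝ≥0∞)
    (hu0meas : Measurable (u 0)) (hu0 : (∫⁻ x, u 0 x ^ γ ∂μ) ≠ ⊤)
    (huj : ∀ j x, u (j + 1) x = (∫⁻ y, G x y * (u j y) ^ q ∂μ) + F x)
    (hmono : ∀ j x, u j x ≤ u (j + 1) x) :
    (∀ j, (∫⁻ x, u j x ^ γ ∂μ) ≠ ⊤)
    ∧ (∃ C'' : ℝ≥0∞, 0 < C'' ∧ C'' ≠ ⊤ ∧ ∀ j,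
        (∫⁻ x, u j x ^ γ ∂μ) ^ (1 / γ)
          ≤ C'' * (1 + (∫⁻ x, F x ^ γ ∂μ) ^ (1 / γ)) ^ (1 / (1 - q)))
    ∧ (∫⁻ x, (⨆ j, u j x) ^ γ ∂μ) ≠ ⊤ := by
  have hγ0 : 0 < γ := hq0.trans hγ
  have hsucc (j : ℕ) : u (j + 1) = fun x => greenPotential μ G (fun y => u j y ^ q) x + F x :=
    funext (huj j)
  have hstep (j : ℕ) (hj : Measurable (u j)) (hjγ : ∫⁻ x, u j x ^ γ ∂μ ≠ ⊤) :
      (∫⁻ x, u (j + 1) x ^ γ ∂μ) ^ (1 / γ) ≤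
        2 ^ (1 / γ) *
          (C * ((∫⁻ x, u j x ^ γ ∂μ) ^ (1 / γ)) ^ q + (∫⁻ x, F x ^ γ ∂μ) ^ (1 / γ)) := by
    rw [hsucc j]
    exact lintegral_greenPotential_rpow_add_le hGmeas hq0 hγ0 hnorm hFmeas hj hjγ
  have hLγ (j : ℕ) : Measurable (u j) ∧ ∫⁻ x, u j x ^ γ ∂μ ≠ ⊤ := by
    induction j with
    | zero => exact ⟨hu0meas, hu0⟩
    | succ j ih =>
      obtain ⟨hj, hjγ⟩ := ih
      refine ⟨hsucc j ▸ (measurable_greenPotential_rpow hGmeas hj hq0 hγ0 hjγ).add hFmeas, ?_⟩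
      refine ((ENNReal.rpow_lt_top_iff_of_pos (one_div_pos.2 hγ0)).1 ?_).ne
      exact (hstep j hj hjγ).trans_lt (by finiteness)
  have hbound (j : ℕ) : (∫⁻ x, u j x ^ γ ∂μ) ^ (1 / γ) ≤
      (2 ^ (1 / γ) * (C + 1) * (1 + (∫⁻ x, F x ^ γ ∂μ) ^ (1 / γ))) ^ (1 / (1 - q)) := by
    obtain ⟨hj, hjγ⟩ := hLγ j
    refine ENNReal.le_rpow_one_div_one_sub_of_le_mul_rpow_add hq0 hq1
      (ENNReal.one_le_rpow one_le_two (one_div_pos.2 hγ0)) (by finiteness) ?_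
    calc (∫⁻ x, u j x ^ γ ∂μ) ^ (1 / γ) ≤ (∫⁻ x, u (j + 1) x ^ γ ∂μ) ^ (1 / γ) := by
          gcongr with x
          exact hmono j x
      _ ≤ _ := hstep j hj hjγ
  have hexp : 0 ≤ 1 / (1 - q) := by have := sub_pos.2 hq1; positivity
  refine ⟨fun j => (hLγ j).2, ⟨(2 ^ (1 / γ) * (C + 1)) ^ (1 / (1 - q)), ?_, by finiteness,
    fun j => (hbound j).trans_eq (ENNReal.mul_rpow_of_nonneg _ _ hexp)⟩, ?_⟩
  · exact ENNReal.rpow_pos (by positivity) (by finiteness)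
  · exact lintegral_iSup_rpow_ne_top hγ0 (fun j => (hLγ j).1) (monotone_nat_of_le_succ hmono)
      (by finiteness) hbound

/-- Uniform `L^γ` bound for the successive approximations: assuming the weighted norm
inequality `‖G[ψ dμ]‖_{L^γ(dμ)} ≤ C ‖ψ‖_{L^{γ/q}(dμ)}`, a nondecreasing sequence
`u_j = G[u_{j−1}^q dμ] + F` with `u_0 ∈ L^γ(dμ)` and `0 ≤ F ∈ L^γ(dμ)` satisfies
`u_j ∈ L^γ(dμ)` for every `j` with
`sup_j ‖u_j‖_{L^γ(dμ)} ≤ C'' (1 + ‖F‖_{L^γ(dμ)})^{1/(1−q)}` for a constant `C''`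
depending only on `C` and `q`; hence the pointwise limit `u = lim u_j = ⨆_j u_j`
belongs to `L^γ(Ω, dμ)`. -/
theorem successive_approximation_Lgamma_bound {Ω : Type*} [MeasurableSpace Ω]
    (G : Ω → Ω → ℝ≥0∞) (μ : Measure Ω)
    (hGmeas : Measurable (Function.uncurry G))
    (q γ : ℝ) (hq0 : 0 < q) (hq1 : q < 1) (hγ : q < γ)
    (C : ℝ≥0∞) (hC0 : 0 < C) (hCtop : C ≠ ⊤)
    (hnorm : ∀ ψ : Ω → ℝ≥0∞, Measurable ψ →
      (∫⁻ x, (∫⁻ y, G x y * ψ y ∂μ) ^ γ ∂μ) ^ (1 / γ)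
        ≤ C * (∫⁻ x, ψ x ^ (γ / q) ∂μ) ^ (q / γ))
    (F : Ω → ℝ≥0∞) (hFmeas : Measurable F) (hF : (∫⁻ x, F x ^ γ ∂μ) ≠ ⊤)
    (u : ℕ → Ω → ℝ≥0∞)
    (hu0meas : Measurable (u 0)) (hu0 : (∫⁻ x, u 0 x ^ γ ∂μ) ≠ ⊤)
    (huj : ∀ j x, u (j + 1) x = (∫⁻ y, G x y * (u j y) ^ q ∂μ) + F x)
    (hmono : ∀ j x, u j x ≤ u (j + 1) x) :
    (∀ j, (∫⁻ x, u j x ^ γ ∂μ) ≠ ⊤)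
    ∧ (∃ C'' : ℝ≥0∞, 0 < C'' ∧ C'' ≠ ⊤ ∧ ∀ j,
        (∫⁻ x, u j x ^ γ ∂μ) ^ (1 / γ)
          ≤ C'' * (1 + (∫⁻ x, F x ^ γ ∂μ) ^ (1 / γ)) ^ (1 / (1 - q)))
    ∧ (∫⁻ x, (⨆ j, u j x) ^ γ ∂μ) ≠ ⊤ :=
  successive_approximation_Lgamma_bound_general G μ hGmeas q γ hq0 hq1 hγ C hCtop hnorm F hFmeas hF
    u hu0meas hu0 huj hmono
end
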